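/- arXiv:1605.05719 — 4 statements merged into one kernel-verified Lean document; each statement's English description precedes it below -/
import Mathlib

section
/- Let w₁, …, w_r be points in ℝ^t whose convex hull P contains the origin, and suppose that the intersection over all i of the convex hulls P_i of {w₁,…,w_r} \ {w_i} is empty. If P is full-dimensional in ℝ^t, then r = t + 1 and the points w₁, …, w_r are affinely independent (P is a t-simplex). -/
/-!
By Radon's theorem an affinely dependent family splits into two parts whose convex hulls meet;
a common point lies in the hull of every family obtained by deleting one point, since each
deletion leaves one of the two parts intact. So the points are affinely independent, and an
affinely independent family spanning `ℝ^t` has exactly `t + 1` members.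
-/

open Set

theorem Convex.affineIndependent_of_iInter_convexHull_image_ne_eq_empty
    {ι 𝕜 E : Type*} [Field 𝕜] [LinearOrder 𝕜] [IsStrictOrderedRing 𝕜]
    [AddCommGroup E] [Module 𝕜 E] {f : ι → E}
    (h : ⋂ i, convexHull 𝕜 (f '' {j | j ≠ i}) = ∅) : AffineIndependent 𝕜 f := by
  by_contra hdep
  obtain ⟨I, p, hpI, hpIc⟩ := Convex.radon_partition hdep
  have hp : p ∈ ⋂ i, convexHull 𝕜 (f '' {j | j ≠ i}) := by
    refine mem_iInter.2 fun i => ?_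
    by_cases hi : i ∈ I
    · exact convexHull_mono (image_mono fun j (hj : j ∉ I) (hji : j = i) => hj (hji ▸ hi)) hpIc
    · exact convexHull_mono (image_mono fun j (hj : j ∈ I) (hji : j = i) => hi (hji ▸ hj)) hpI
  simp [h] at hp

theorem stmt4_general (t r : ℕ) (w : Fin r → (Fin t → ℝ))
    (hfull : affineSpan ℝ (Set.range w) = ⊤)
    (hempty : (⋂ i : Fin r, convexHull ℝ (w '' {j | j ≠ i})) = ∅) :
    r = t + 1 ∧ AffineIndependent ℝ w := by
  have hind := Convex.affineIndependent_of_iInter_convexHull_image_ne_eq_empty hempty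
  refine ⟨?_, hind⟩
  simpa using hind.affineSpan_eq_top_iff_card_eq_finrank_add_one.1 hfull

/-- If P = conv{w₁,…,w_r} ⊆ ℝ^t contains the origin, is full-dimensional, and
the intersection of the convex hulls of the sets obtained by deleting one point
is empty, then r = t + 1 and the points are affinely independent (P is a
t-simplex). -/
theorem stmt4 (t r : ℕ) (w : Fin r → (Fin t → ℝ))
    (h0 : (0 : Fin t → ℝ) ∈ convexHull ℝ (Set.range w))
    (hfull : affineSpan ℝ (Set.range w) = ⊤)
    (hempty : (⋂ i : Fin r, convexHull ℝ (w '' {j | j ≠ i})) = ∅) :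
    r = t + 1 ∧ AffineIndependent ℝ w :=
  stmt4_general t r w hfull hempty
end

section
/- Let C₁ and C₂ be convex subsets of ℝ^n, with C₁ the convex hull of w₁,…,w_s and 0 an interior point of C₁ relative to the subspace V₁ spanned by w₁,…,w_s. If C₁ ∩ C₂ = {0} and C₂ is the convex hull of finitely many points spanning a subspace V₂, and moreover V₁ ∩ C₂ = {0} and every point of V₁ is a nonnegative combination of w₁,…,w_s scaled appropriately, then under the additional hypothesis that for any partition of {w₁,…,w_s} ∪ {generators of C₂} into two parts the intersection of their convex hulls is at most {0}, we have V₁ ∩ V₂ = {0}. -/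
/-!
Let `x ∈ V₁ ∩ V₂`. Write `x = ∑_{i<s} bᵢ wᵢ` with `b ≥ 0`. Since `0 ∈ C₂` lies in the affine span
of the `wᵢ` with `i ≥ s`, also `x = ∑_{i≥s} cᵢ wᵢ` with total weight `∑ cᵢ = ∑ bᵢ`. Moving the
nonpositive part of `c` to the left gives two nonnegative combinations of equal total weight over
disjoint index sets with the same value; normalised, that value lies in both convex hulls, so it is
`0`. Hence `-x` is a nonnegative combination of the `wᵢ` with `i ≥ s` lying in `V₁`, and normalising
puts it in `V₁ ∩ C₂ = {0}`.
-/

open Set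

section

variable {𝕜 E ι : Type*} [Field 𝕜] [AddCommGroup E] [Module 𝕜 E] {t : Finset ι} {w : ι → E}

theorem exists_sum_eq_sum_smul_eq_of_zero_mem_affineSpan
    (h0 : (0 : E) ∈ affineSpan 𝕜 (w '' t)) {x : E} (hx : x ∈ Submodule.span 𝕜 (w '' t)) (T : 𝕜) :
    ∃ c : ι → 𝕜, ∑ i ∈ t, c i = T ∧ ∑ i ∈ t, c i • w i = x := by
  classical
  obtain ⟨a, rfl⟩ := (Submodule.mem_span_image_finset_iff_exists_fun' 𝕜).1 hx
  obtain ⟨u, d, hus, hd, hdw⟩ := eq_affineCombination_of_mem_affineSpan_image h0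
  rw [affineCombination_eq_centerMass hd, Finset.centerMass_eq_of_sum_1 _ _ hd] at hdw
  have hut : u ⊆ t := by exact_mod_cast hus
  have hd' : ∑ i ∈ t, (u : Set ι).indicator d i = 1 := by
    rw [Finset.sum_indicator_subset _ hut, hd]
  have hdw' : ∑ i ∈ t, (u : Set ι).indicator d i • w i = 0 := by
    rw [Finset.sum_indicator_subset_of_eq_zero _ (fun i a ↦ a • w i) hut fun _ ↦ zero_smul _ _,
      hdw]
  refine ⟨a + (T - ∑ i ∈ t, a i) • (u : Set ι).indicator d, ?_, ?_⟩
  · simp [Finset.sum_add_distrib, ← Finset.mul_sum, hd']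
  · simp [add_smul, mul_smul, Finset.sum_add_distrib, ← Finset.smul_sum, hdw']

variable [LinearOrder 𝕜] [IsStrictOrderedRing 𝕜]

theorem Finset.sum_smul_eq_zero_of_centerMass_eq_zero {c : ι → 𝕜} {z : ι → E}
    (hc : ∀ i ∈ t, 0 ≤ c i) (h : 0 < ∑ i ∈ t, c i → t.centerMass c z = 0) :
    ∑ i ∈ t, c i • z i = 0 := by
  rcases (Finset.sum_nonneg hc).eq_or_lt with hT | hT
  · exact Finset.sum_eq_zero fun i hi ↦ by
      rw [(Finset.sum_eq_zero_iff_of_nonneg hc).1 hT.symm i hi, zero_smul]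
  · simpa [Finset.centerMass, hT.ne'] using h hT

theorem sum_smul_eq_zero_of_mem_of_inter_convexHull_subset {V : Submodule 𝕜 E} {S : Set E}
    {c : ι → 𝕜} {z : ι → E} (hV : (V : Set E) ∩ convexHull 𝕜 S ⊆ {0}) (hc : ∀ i ∈ t, 0 ≤ c i)
    (hz : ∀ i ∈ t, z i ∈ S) (hmem : ∑ i ∈ t, c i • z i ∈ V) : ∑ i ∈ t, c i • z i = 0 :=
  Finset.sum_smul_eq_zero_of_centerMass_eq_zero hc fun hT ↦
    hV ⟨V.smul_mem _ hmem, t.centerMass_mem_convexHull hc hT hz⟩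

theorem sum_filter_pos_smul_eq_zero_of_sum_smul_eq
    (hpart : ∀ B₁ B₂ : Set ι, B₁.Nonempty → B₂.Nonempty → B₁ ∩ B₂ = ∅ →
      convexHull 𝕜 (w '' B₁) ∩ convexHull 𝕜 (w '' B₂) ⊆ {0})
    {t₁ t₂ : Finset ι} (hdisj : Disjoint t₁ t₂) {b c : ι → 𝕜} (hb : ∀ i ∈ t₁, 0 ≤ b i)
    (hsum : ∑ i ∈ t₁, b i = ∑ i ∈ t₂, c i) (hsmul : ∑ i ∈ t₁, b i • w i = ∑ i ∈ t₂, c i • w i) :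
    ∑ i ∈ t₂ with 0 < c i, c i • w i = 0 := by
  classical
  set P := t₂.filter (0 < c ·)
  set N := t₂.filter (¬0 < c ·)
  refine Finset.sum_smul_eq_zero_of_centerMass_eq_zero (fun i hi ↦ (Finset.mem_filter.1 hi).2.le)
    fun hT ↦ ?_
  have hweight : ∑ i ∈ t₁.disjSum N, Sum.elim b (-c) i = ∑ i ∈ P, c i := by
    have := Finset.sum_filter_add_sum_filter_not t₂ (0 < c ·) c
    simp only [Finset.sum_disjSum, Sum.elim_inl, Sum.elim_inr, Pi.neg_apply,
      Finset.sum_neg_distrib]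
    linear_combination hsum - this
  have hvec : ∑ i ∈ t₁.disjSum N, Sum.elim b (-c) i • Sum.elim w w i = ∑ i ∈ P, c i • w i := by
    have := Finset.sum_filter_add_sum_filter_not t₂ (0 < c ·) (fun i ↦ c i • w i)
    simp only [Finset.sum_disjSum, Sum.elim_inl, Sum.elim_inr, Pi.neg_apply, neg_smul,
      Finset.sum_neg_distrib]
    rw [hsmul, ← this]
    abel
  have hP : P.centerMass c w ∈ convexHull 𝕜 (w '' P) :=
    P.centerMass_mem_convexHull (fun i hi ↦ (Finset.mem_filter.1 hi).2.le) hT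
      fun i hi ↦ mem_image_of_mem w hi
  have hN : P.centerMass c w ∈ convexHull 𝕜 (w '' ↑(t₁ ∪ N)) := by
    rw [Finset.centerMass, ← hweight, ← hvec]
    refine Finset.centerMass_mem_convexHull _ ?_ (hweight ▸ hT) ?_
    · rintro (i | i) hi <;> simp only [Finset.inl_mem_disjSum, Finset.inr_mem_disjSum] at hi
      · exact hb i hi
      · exact neg_nonneg.2 (not_lt.1 (Finset.mem_filter.1 hi).2)
    · rintro (i | i) hi <;> simp only [Finset.inl_mem_disjSum, Finset.inr_mem_disjSum] at hi
      · exact mem_image_of_mem w (Finset.mem_union_left _ hi)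
      · exact mem_image_of_mem w (Finset.mem_union_right _ hi)
  have hdisj' : Disjoint (t₁ ∪ N) P := Finset.disjoint_union_left.2
    ⟨hdisj.mono_right (Finset.filter_subset _ _), (Finset.disjoint_filter_filter_not _ _ _).symm⟩
  exact hpart _ _ (image_nonempty.1 (convexHull_nonempty_iff.1 ⟨_, hN⟩))
    (image_nonempty.1 (convexHull_nonempty_iff.1 ⟨_, hP⟩))
    (Finset.disjoint_coe.2 hdisj').inter_eq ⟨hN, hP⟩

end

theorem stmt7_general (n r s : ℕ) (w : Fin r → EuclideanSpace ℝ (Fin n))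
    (A₂ : Set (Fin r)) (hA₂ : A₂ = {i : Fin r | s ≤ (i : ℕ)})
    (V₁ : Submodule ℝ (EuclideanSpace ℝ (Fin n)))
    (V₂ : Submodule ℝ (EuclideanSpace ℝ (Fin n))) (hV₂ : V₂ = Submodule.span ℝ (w '' A₂))
    (C₂ : Set (EuclideanSpace ℝ (Fin n))) (hC₂ : C₂ = convexHull ℝ (w '' A₂))
    (hV₁C₂ : (V₁ : Set (EuclideanSpace ℝ (Fin n))) ∩ C₂ = {0})
    (hnonneg : ∀ x ∈ V₁, ∃ a : Fin r → ℝ, (∀ i, 0 ≤ a i) ∧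
      x = ∑ i ∈ Finset.univ.filter (fun i : Fin r => (i : ℕ) < s), a i • w i)
    (hpart : ∀ B₁ B₂ : Set (Fin r), B₁.Nonempty → B₂.Nonempty → B₁ ∩ B₂ = ∅ →
      convexHull ℝ (w '' B₁) ∩ convexHull ℝ (w '' B₂) ⊆ {0}) :
    V₁ ⊓ V₂ = ⊥ := by
  classical
  set F₁ := Finset.univ.filter fun i : Fin r => (i : ℕ) < s
  set F₂ := Finset.univ.filter fun i : Fin r => s ≤ (i : ℕ)
  have hF₂ : A₂ = F₂ := by ext; simp [hA₂, F₂]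
  subst hV₂ hC₂ hF₂
  rw [eq_bot_iff]
  rintro x ⟨hx₁, hx₂⟩
  obtain ⟨b, hb, hxb⟩ := hnonneg x hx₁
  have h0 : (0 : EuclideanSpace ℝ (Fin n)) ∈ convexHull ℝ (w '' F₂) :=
    ((Set.ext_iff.1 hV₁C₂ 0).2 rfl).2
  obtain ⟨c, hc, hxc⟩ := exists_sum_eq_sum_smul_eq_of_zero_mem_affineSpan
    (convexHull_subset_affineSpan _ h0) hx₂ (∑ i ∈ F₁, b i)
  have hpos : ∑ i ∈ F₂ with 0 < c i, c i • w i = 0 :=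
    sum_filter_pos_smul_eq_zero_of_sum_smul_eq hpart
      (Finset.disjoint_filter.2 fun i _ h₁ h₂ ↦ by omega) (fun i _ ↦ hb i) hc.symm
      (hxb ▸ hxc.symm)
  have hneg : ∑ i ∈ F₂ with ¬0 < c i, (-c i) • w i = -x := by
    rw [← hxc, ← Finset.sum_filter_add_sum_filter_not F₂ (0 < c ·), hpos, zero_add,
      ← Finset.sum_neg_distrib]
    simp only [neg_smul]
  have hnegx := sum_smul_eq_zero_of_mem_of_inter_convexHull_subset hV₁C₂.subset
    (fun i hi ↦ neg_nonneg.2 (not_lt.1 (Finset.mem_filter.1 hi).2))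
    (fun i hi ↦ mem_image_of_mem w (Finset.filter_subset _ _ hi)) (hneg ▸ V₁.neg_mem hx₁)
  exact neg_eq_zero.1 (hneg ▸ hnegx)

/-- Key step of Proposition 5.5: with C₁ = conv{w i : i ∈ A₁} containing 0 in
its relative interior in V₁ = span{w i : i ∈ A₁}, C₂ = conv{w i : i ∈ A₂},
V₂ = span{w i : i ∈ A₂}, if C₁ ∩ C₂ = {0}, V₁ ∩ C₂ = {0}, every point of V₁
is a nonnegative combination of the w i (i ∈ A₁), and any partition of a
subset of the points into two nonempty parts has convex hulls meeting in at
most {0}, then V₁ ∩ V₂ = {0}. -/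
theorem stmt7 (n r s : ℕ) (hs : s ≤ r) (w : Fin r → EuclideanSpace ℝ (Fin n))
    (A₁ : Set (Fin r)) (hA₁ : A₁ = {i : Fin r | (i : ℕ) < s})
    (A₂ : Set (Fin r)) (hA₂ : A₂ = {i : Fin r | s ≤ (i : ℕ)})
    (V₁ : Submodule ℝ (EuclideanSpace ℝ (Fin n))) (hV₁ : V₁ = Submodule.span ℝ (w '' A₁))
    (V₂ : Submodule ℝ (EuclideanSpace ℝ (Fin n))) (hV₂ : V₂ = Submodule.span ℝ (w '' A₂))
    (C₁ : Set (EuclideanSpace ℝ (Fin n))) (hC₁ : C₁ = convexHull ℝ (w '' A₁))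
    (C₂ : Set (EuclideanSpace ℝ (Fin n))) (hC₂ : C₂ = convexHull ℝ (w '' A₂))
    (hrelint : ∃ ε > (0:ℝ), ∀ x ∈ V₁, ‖x‖ < ε → x ∈ C₁)
    (hC₁C₂ : C₁ ∩ C₂ = {0})
    (hV₁C₂ : (V₁ : Set (EuclideanSpace ℝ (Fin n))) ∩ C₂ = {0})
    (hnonneg : ∀ x ∈ V₁, ∃ a : Fin r → ℝ, (∀ i, 0 ≤ a i) ∧
      x = ∑ i ∈ Finset.univ.filter (fun i : Fin r => (i : ℕ) < s), a i • w i)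
    (hpart : ∀ B₁ B₂ : Set (Fin r), B₁.Nonempty → B₂.Nonempty → B₁ ∩ B₂ = ∅ →
      convexHull ℝ (w '' B₁) ∩ convexHull ℝ (w '' B₂) ⊆ {0}) :
    V₁ ⊓ V₂ = ⊥ :=
  stmt7_general n r s w A₂ hA₂ V₁ V₂ hV₂ C₂ hC₂ hV₁C₂ hnonneg hpart
end

section
/- Let A be a commutative ring and consider the polynomial ring A[x, x', y₁, …, y_r, z₁, …, z_t] modulo the relation x·x' = y₁⋯y_r + z₁⋯z_t. This quotient ring is an integral domain when A is an integral domain, r, t ≥ 1. -/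
/-!
Put `c = y₁⋯y_r + z₁⋯z_t`, which is nonzero because `r ≥ 1`. As a polynomial in `x` over
`B = A[x', y, z]` the relation is `x' · x - c`, with `x'` prime in `B` and `x' ∤ c`. Such a linear
polynomial `a X - c` is prime: for any `f`, `a ^ deg f · f ≡ b (mod aX - c)` for a constant `b`
(substitute `aX ↦ c` in the homogenization `f.scaleRoots a`), so `aX - c ∣ f g` forces
`aX - c ∣ C (b b')`, hence `b b' = 0` by degree; and `aX - c ∣ a ^ n h` implies `aX - c ∣ h`
because the prime `a` does not divide the constant term `-c`.
-/

namespace Polynomial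

variable {B : Type*} [CommRing B]

theorem C_mul_X_sub_C_dvd_C_pow_mul_sub (a c : B) (f : B[X]) :
    C a * X - C c ∣ C a ^ f.natDegree * f - C ((f.scaleRoots a).eval c) := by
  have := sub_dvd_eval_sub (C a * X) (C c) ((f.scaleRoots a).map C)
  rwa [eval_map, eval_map, scaleRoots_eval₂_mul, eval₂_C_X, eval₂_at_apply] at this

variable [IsDomain B] {a c : B}

theorem dvd_of_C_mul_X_sub_C_dvd_C_pow_mul (ha : Prime a) (hc : ¬ a ∣ c) {n : ℕ} {h : B[X]}
    (hdvd : C a * X - C c ∣ C a ^ n * h) : C a * X - C c ∣ h := by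
  obtain ⟨s, hs⟩ := hdvd
  have hCa : ¬ C a ∣ C a * X - C c := fun hd ↦ by
    have := (C_dvd_iff_dvd_coeff _ _).1 hd 0
    simp_all
  obtain ⟨s', rfl⟩ := (prime_C_iff.2 ha).pow_dvd_of_dvd_mul_left n hCa ⟨h, hs.symm⟩
  refine ⟨s', mul_left_cancel₀ (pow_ne_zero n (C_ne_zero.2 ha.ne_zero)) ?_⟩
  rw [hs]; ring

theorem eq_zero_of_C_mul_X_sub_C_dvd_C (ha : a ≠ 0) {b : B} (hb : C a * X - C c ∣ C b) :
    b = 0 := by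
  by_contra hb0
  have := natDegree_le_of_dvd hb (C_ne_zero.2 hb0)
  rw [natDegree_C, natDegree_sub_C, natDegree_C_mul_X a ha] at this
  omega

theorem prime_C_mul_X_sub_C (ha : Prime a) (hc : ¬ a ∣ c) : Prime (C a * X - C c) := by
  have hdeg : (C a * X - C c).natDegree = 1 := by
    rw [natDegree_sub_C, natDegree_C_mul_X a ha.ne_zero]
  refine ⟨fun h ↦ by simp [h] at hdeg, fun hu ↦ by simp [natDegree_eq_zero_of_isUnit hu] at hdeg,
    fun f g hfg ↦ ?_⟩
  have hf := C_mul_X_sub_C_dvd_C_pow_mul_sub a c f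
  have hg := C_mul_X_sub_C_dvd_C_pow_mul_sub a c g
  set b := (f.scaleRoots a).eval c
  set b' := (g.scaleRoots a).eval c
  have hbb' : b * b' = 0 := by
    refine eq_zero_of_C_mul_X_sub_C_dvd_C (c := c) ha.ne_zero ?_
    have hsplit : C (b * b') = (C a ^ f.natDegree * f) * (C a ^ g.natDegree * g)
        - ((C a ^ f.natDegree * f - C b) * (C a ^ g.natDegree * g)
          + C b * (C a ^ g.natDegree * g - C b')) := by
      rw [C_mul]; ring
    rw [hsplit]
    refine dvd_sub ?_ (dvd_add (dvd_mul_of_dvd_left hf _) (dvd_mul_of_dvd_right hg _))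
    exact hfg.trans ⟨C a ^ f.natDegree * C a ^ g.natDegree, by ring⟩
  rcases mul_eq_zero.1 hbb' with hb | hb
  · exact .inl (dvd_of_C_mul_X_sub_C_dvd_C_pow_mul ha hc (by simpa [hb] using hf))
  · exact .inr (dvd_of_C_mul_X_sub_C_dvd_C_pow_mul ha hc (by simpa [hb] using hg))

end Polynomial

open MvPolynomial

theorem MvPolynomial.prime_X_zero_mul_X_one_sub_C {D : Type*} [CommRing D] [IsDomain D] {d : D}
    (hd : d ≠ 0) : Prime (X 0 * X 1 - C d : MvPolynomial (Fin 2) D) := by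
  rw [← MulEquiv.prime_iff (finSuccEquiv D 1)]
  have hX : ¬ X 0 ∣ (C d : MvPolynomial (Fin 1) D) := fun h ↦ by
    simpa [hd] using map_dvd constantCoeff h
  convert Polynomial.prime_C_mul_X_sub_C (X_prime (i := 0)) hX using 1
  have hX1 : finSuccEquiv D 1 (X 1) = Polynomial.C (X 0) := finSuccEquiv_X_succ (j := 0)
  rw [map_sub, map_mul, finSuccEquiv_X_zero, hX1, mul_comm]
  congr 1
  exact (finSuccEquiv D 1).commutes d

theorem stmt14_general (A : Type*) [CommRing A] [IsDomain A] (r t : ℕ)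
    (hr : 1 ≤ r) :
    IsDomain (MvPolynomial (Fin 2 ⊕ Fin r ⊕ Fin t) A ⧸
      Ideal.span {(X (Sum.inl 0) * X (Sum.inl 1)
        - ∏ i : Fin r, X (Sum.inr (Sum.inl i))
        - ∏ j : Fin t, X (Sum.inr (Sum.inr j)) :
          MvPolynomial (Fin 2 ⊕ Fin r ⊕ Fin t) A)}) := by
  set c : MvPolynomial (Fin r ⊕ Fin t) A := ∏ i : Fin r, X (Sum.inl i) + ∏ j : Fin t, X (Sum.inr j)
  have hc : c ≠ 0 := fun h ↦ by
    have := congrArg (eval (Sum.elim 0 1)) h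
    simp [c, zero_pow (Nat.one_le_iff_ne_zero.1 hr)] at this
  rw [Ideal.Quotient.isDomain_iff_prime]
  suffices hf : Prime (X (Sum.inl 0) * X (Sum.inl 1)
        - ∏ i : Fin r, X (Sum.inr (Sum.inl i))
        - ∏ j : Fin t, X (Sum.inr (Sum.inr j)) : MvPolynomial (Fin 2 ⊕ Fin r ⊕ Fin t) A) from
    (Ideal.span_singleton_prime hf.ne_zero).2 hf
  rw [← MulEquiv.prime_iff (sumAlgEquiv A (Fin 2) (Fin r ⊕ Fin t))]
  convert prime_X_zero_mul_X_one_sub_C hc using 1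
  simp [c, sumAlgEquiv_X_inl, sumAlgEquiv_X_inr, sub_sub]

/-- The hypersurface ring A[x,x',y₁,…,y_r,z₁,…,z_t]/(x·x' - y₁⋯y_r - z₁⋯z_t)
is an integral domain when A is an integral domain and r, t ≥ 1. -/
theorem stmt14 (A : Type*) [CommRing A] [IsDomain A] (r t : ℕ)
    (hr : 1 ≤ r) (ht : 1 ≤ t) :
    IsDomain (MvPolynomial (Fin 2 ⊕ Fin r ⊕ Fin t) A ⧸
      Ideal.span {(X (Sum.inl 0) * X (Sum.inl 1)
        - ∏ i : Fin r, X (Sum.inr (Sum.inl i))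
        - ∏ j : Fin t, X (Sum.inr (Sum.inr j)) :
          MvPolynomial (Fin 2 ⊕ Fin r ⊕ Fin t) A)}) :=
  stmt14_general A r t hr
end

section
/- Let τ be a 2×2 real matrix with real eigenvalues λ > 1 and 0 < μ < 1 with corresponding linearly independent eigenvectors v₁, v₂, and let C be a closed convex cone in ℝ² not containing any eigenvector of τ in its interior except possibly on its boundary rays, with C invariant under τ. Let z ∈ C and z_i = τ^i z. If the cones [z_i, z_{i+1}] and [z_{i+1}, z_{i+2}] share more than the ray through z_{i+1}, then τ fixes a ray in [z_i, z_{i+1}], i.e. has an eigenvector in that cone. -/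
open Matrix

def cone2 (a b : Fin 2 → ℝ) : Set (Fin 2 → ℝ) :=
  {x | ∃ s t : ℝ, 0 ≤ s ∧ 0 ≤ t ∧ x = s • a + t • b}

/-! Write `z₀ = a • v₁ + b • v₂` in the eigenbasis. If `a = 0` or `b = 0`, then `z₀` itself is an
eigenvector with positive eigenvalue (or `z₀ = 0`, and both cones are `{0}`). Otherwise compare
coordinates in `s • z₀ + t • τ z₀ = s' • τ z₀ + t' • τ² z₀`: the quadratic
`s + (t - s') X - t' X²` vanishes at `λ` and at `μ`, so `s = -t' λ μ ≤ 0` forces `s = 0`, i.e. the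
common point lies on the ray through `z₁`. -/

lemma exists_smul_add_smul_eq {K V : Type*} [Field K] [AddCommGroup V] [Module K V]
    (hV : Module.finrank K V = 2) {x y : V} (h : LinearIndependent K ![x, y]) (z : V) :
    ∃ a b : K, a • x + b • y = z := by
  have hspan := h.span_eq_top_of_card_eq_finrank (by simp [hV])
  rw [Matrix.range_cons, Matrix.range_cons, Matrix.range_empty, Set.union_empty,
    Set.singleton_union] at hspan
  exact Submodule.mem_span_pair.mp (hspan ▸ Submodule.mem_top)

lemma eq_zero_of_quadratic_roots {K : Type*} [Field K] [LinearOrder K] [IsStrictOrderedRing K]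
    {s t s' t' lam mu : K} (hs : 0 ≤ s) (ht' : 0 ≤ t') (hlam : 0 < lam) (hmu : 0 < mu)
    (hne : lam ≠ mu) (h₁ : s + t * lam = s' * lam + t' * lam ^ 2)
    (h₂ : s + t * mu = s' * mu + t' * mu ^ 2) : s = 0 := by
  have hvieta : (s + t' * lam * mu) * (lam - mu) = 0 := by linear_combination lam * h₂ - mu * h₁
  have hsum : s + t' * lam * mu = 0 := (mul_eq_zero.mp hvieta).resolve_right (sub_ne_zero.mpr hne)
  have hprod : 0 ≤ t' * lam * mu := by positivity
  linarith

section Eigenbasis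

variable {n R : Type*} [Fintype n] [CommSemiring R] {A : Matrix n n R} {lam mu : R}
  {v₁ v₂ : n → R}

lemma mulVec_smul_add_smul_of_eigen (hv₁ : A *ᵥ v₁ = lam • v₁) (hv₂ : A *ᵥ v₂ = mu • v₂)
    (a b : R) : A *ᵥ (a • v₁ + b • v₂) = (lam * a) • v₁ + (mu * b) • v₂ := by
  rw [mulVec_add, mulVec_smul, mulVec_smul, hv₁, hv₂, smul_comm a, smul_comm b, smul_smul,
    smul_smul]

lemma exists_pos_eigen_of_coord_eq_zero [PartialOrder R] (hv₁ : A *ᵥ v₁ = lam • v₁)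
    (hv₂ : A *ᵥ v₂ = mu • v₂) (hlam : 0 < lam) (hmu : 0 < mu) {a b : R} {z : n → R}
    (hz : a • v₁ + b • v₂ = z) (h : a = 0 ∨ b = 0) : ∃ c : R, 0 < c ∧ A *ᵥ z = c • z := by
  subst hz
  rcases h with rfl | rfl
  · exact ⟨mu, hmu, by rw [zero_smul, zero_add, mulVec_smul, hv₂, smul_comm]⟩
  · exact ⟨lam, hlam, by rw [zero_smul, add_zero, mulVec_smul, hv₁, smul_comm]⟩

end Eigenbasis

lemma left_mem_cone2 (x y : Fin 2 → ℝ) : x ∈ cone2 x y :=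
  ⟨1, 0, zero_le_one, le_rfl, by simp⟩

lemma cone2_inter_cone2_subset_ray {τ : Matrix (Fin 2) (Fin 2) ℝ} {lam mu : ℝ}
    {v₁ v₂ : Fin 2 → ℝ} (hv₁ : τ *ᵥ v₁ = lam • v₁) (hv₂ : τ *ᵥ v₂ = mu • v₂)
    (hindep : LinearIndependent ℝ ![v₁, v₂]) (hlam : 0 < lam) (hmu : 0 < mu) (hne : lam ≠ mu)
    {a b : ℝ} {z : Fin 2 → ℝ} (hz : a • v₁ + b • v₂ = z) (ha : a ≠ 0) (hb : b ≠ 0) :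
    cone2 z (τ *ᵥ z) ∩ cone2 (τ *ᵥ z) (τ *ᵥ τ *ᵥ z) ⊆ {x | ∃ c : ℝ, 0 ≤ c ∧ x = c • τ *ᵥ z} := by
  have hz₁ : τ *ᵥ z = (lam * a) • v₁ + (mu * b) • v₂ :=
    hz ▸ mulVec_smul_add_smul_of_eigen hv₁ hv₂ a b
  have hz₂ : τ *ᵥ τ *ᵥ z = (lam * (lam * a)) • v₁ + (mu * (mu * b)) • v₂ := by
    rw [hz₁, mulVec_smul_add_smul_of_eigen hv₁ hv₂]
  rintro x ⟨⟨s, t, hs, ht, rfl⟩, ⟨s', t', -, ht', hx⟩⟩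
  have hcoord : ((s + t * lam) * a) • v₁ + ((s + t * mu) * b) • v₂ =
      ((s' * lam + t' * lam ^ 2) * a) • v₁ + ((s' * mu + t' * mu ^ 2) * b) • v₂ := by
    rw [hz₂, hz₁, ← hz] at hx
    convert hx using 1 <;> module
  obtain ⟨h₁, h₂⟩ := hindep.eq_of_pair hcoord
  have hs0 := eq_zero_of_quadratic_roots hs ht' hlam hmu hne
    (mul_right_cancel₀ ha h₁) (mul_right_cancel₀ hb h₂)
  exact ⟨t, ht, by simp [hs0]⟩

theorem stmt15_general (τ : Matrix (Fin 2) (Fin 2) ℝ)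
    (lam mu : ℝ) (hlam : 1 < lam) (hmu0 : 0 < mu) (hmu1 : mu < 1)
    (v₁ v₂ : Fin 2 → ℝ) (hv₁ : τ.mulVec v₁ = lam • v₁) (hv₂ : τ.mulVec v₂ = mu • v₂)
    (hindep : LinearIndependent ℝ ![v₁, v₂])
    (z₀ z₁ z₂ : Fin 2 → ℝ)
    (hz₁ : z₁ = τ.mulVec z₀) (hz₂ : z₂ = τ.mulVec z₁)
    (hshare : ¬ (cone2 z₀ z₁ ∩ cone2 z₁ z₂ ⊆ {x | ∃ c : ℝ, 0 ≤ c ∧ x = c • z₁})) :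
    ∃ v ∈ cone2 z₀ z₁, v ≠ 0 ∧ ∃ c : ℝ, 0 < c ∧ τ.mulVec v = c • v := by
  have hlam0 : 0 < lam := zero_lt_one.trans hlam
  obtain ⟨a, b, hab⟩ := exists_smul_add_smul_eq (by simp) hindep z₀
  subst hz₁ hz₂
  by_cases hcoord : a = 0 ∨ b = 0
  · by_cases hz : z₀ = 0
    · refine absurd ?_ hshare
      rintro x ⟨⟨s, t, -, -, rfl⟩, -⟩
      exact ⟨0, le_rfl, by simp [hz]⟩
    · exact ⟨z₀, left_mem_cone2 _ _, hz,
        exists_pos_eigen_of_coord_eq_zero hv₁ hv₂ hlam0 hmu0 hab hcoord⟩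
  · push Not at hcoord
    exact absurd (cone2_inter_cone2_subset_ray hv₁ hv₂ hindep hlam0 hmu0
      (hmu1.trans hlam).ne' hab hcoord.1 hcoord.2) hshare

/-- If τ is a 2×2 matrix with eigenvalues λ > 1 and 0 < μ < 1 (independent
eigenvectors v₁, v₂), C is a closed convex τ-invariant cone containing z₀ whose
interior contains no eigenvector of τ, z₁ = τz₀, z₂ = τz₁, and the cones
[z₀,z₁] and [z₁,z₂] share more than the ray through z₁, then τ has an
eigenvector with positive eigenvalue lying in [z₀,z₁]. -/
theorem stmt15 (τ : Matrix (Fin 2) (Fin 2) ℝ)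
    (lam mu : ℝ) (hlam : 1 < lam) (hmu0 : 0 < mu) (hmu1 : mu < 1)
    (v₁ v₂ : Fin 2 → ℝ) (hv₁ : τ.mulVec v₁ = lam • v₁) (hv₂ : τ.mulVec v₂ = mu • v₂)
    (hindep : LinearIndependent ℝ ![v₁, v₂])
    (C : Set (Fin 2 → ℝ)) (hclosed : IsClosed C) (hconv : Convex ℝ C)
    (hconeC : ∀ (c : ℝ), 0 ≤ c → ∀ x ∈ C, c • x ∈ C)
    (hinv : ∀ x ∈ C, τ.mulVec x ∈ C)
    (hnoeig : ∀ x ∈ interior C, ∀ c : ℝ, τ.mulVec x = c • x → x = 0)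
    (z₀ z₁ z₂ : Fin 2 → ℝ) (hz₀ : z₀ ∈ C)
    (hz₁ : z₁ = τ.mulVec z₀) (hz₂ : z₂ = τ.mulVec z₁)
    (hshare : ¬ (cone2 z₀ z₁ ∩ cone2 z₁ z₂ ⊆ {x | ∃ c : ℝ, 0 ≤ c ∧ x = c • z₁})) :
    ∃ v ∈ cone2 z₀ z₁, v ≠ 0 ∧ ∃ c : ℝ, 0 < c ∧ τ.mulVec v = c • v :=
  stmt15_general τ lam mu hlam hmu0 hmu1 v₁ v₂ hv₁ hv₂ hindep z₀ z₁ z₂ hz₁ hz₂ hshare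
end
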